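/- arXiv:2009.10685 — 4 statements merged into one kernel-verified Lean document; each statement's English description precedes it below -/
import Mathlib

section
/- Let X = (X_1, …, X_k) be a centered multivariate Gaussian vector in ℝ^k with positive definite covariance matrix Ω. For i ∈ [k], write X_{ī} for the vector X with the i-th coordinate removed, Ω_{j j̄} for the j-th row of Ω with entry j removed, and Ω_{j̄ j̄} for Ω with the j-th row and column removed. Let f : ℝ^k → ℝ be differentiable with f and all its partial derivatives polynomially bounded. Then for every i ∈ [k], E[X_i f(X)] = ∑_{j=1}^k a_j Ω_{j i}, where a_j := E[(X_j − Ω_{j j̄} Ω_{j̄ j̄}⁻¹ X_{j̄}) f(X)] / (Ω_{jj} − Ω_{j j̄} Ω_{j̄ j̄}⁻¹ Ω_{j̄ j}); in particular the coefficients a_j do not depend on i. -/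
open MeasureTheory ProbabilityTheory Matrix

/-- A measure `μ` on `ℝ^k` is a centered Gaussian with covariance matrix `Λ` iff every
linear functional pushes it forward to a one-dimensional centered Gaussian with the
corresponding variance. -/
def IsGaussianVec {k : ℕ} (μ : Measure (Fin k → ℝ)) (Λ : Matrix (Fin k) (Fin k) ℝ) : Prop :=
  ∀ a : Fin k → ℝ,
    Measure.map (fun x => ∑ i, a i * x i) μ =
      gaussianReal 0 (Real.toNNReal (∑ i, ∑ j, a i * Λ i j * a j))

/-!
Write `r_j(x) = x_j - Ω_{j j̄} Ω_{j̄ j̄}⁻¹ x_{j̄}` for the residual of regressing `x_j` on the other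
coordinates. It is linear and vanishes on every column of `Ω` except the `j`-th, so
`r_j(Ω y) = σ_j y_j` with `σ_j = r_j(Ω_{· j})` the Schur complement; hence `r_j(x) = σ_j (Ω⁻¹ x)_j`
and `a_j = (Ω⁻¹ m)_j` where `m_t = E[X_t f(X)]`. By symmetry of `Ω`,
`∑_j a_j Ω_{j i} = (Ω Ω⁻¹ m)_i = m_i`. Linearity of expectation is legitimate because a Gaussian
vector has moments of all orders (Fernique), so every `X_t f(X)` is integrable.
-/

theorem IsGaussianVec.isGaussian {n : ℕ} {μ : Measure (Fin n → ℝ)}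
    {Λ : Matrix (Fin n) (Fin n) ℝ} (h : IsGaussianVec μ Λ) : IsGaussian μ := by
  refine isGaussian_of_map_eq_gaussianReal fun L => ?_
  have hL : ⇑L = fun x => ∑ i, L (Pi.single i 1) * x i := by
    ext x
    conv_lhs => rw [pi_eq_sum_univ' x]
    simp [mul_comm]
  exact ⟨0, _, hL ▸ h _⟩

section GaussianMoments

variable {E : Type*} [NormedAddCommGroup E] [NormedSpace ℝ E] [MeasurableSpace E] [BorelSpace E]
  [CompleteSpace E] [SecondCountableTopology E] {μ : Measure E} [IsGaussian μ]

theorem IsGaussian.integrable_norm_rpow {q : ℝ} (hq : 0 ≤ q) :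
    Integrable (fun x => ‖x‖ ^ q) μ := by
  simpa [hq] using
    (IsGaussian.memLp_id μ (ENNReal.ofReal q) ENNReal.ofReal_ne_top).integrable_norm_rpow'

theorem IsGaussian.integrable_dual_mul_of_abs_le (L : StrongDual ℝ E) {g : E → ℝ}
    (hg : AEStronglyMeasurable g μ) {C p : ℝ} (hp : 0 ≤ p)
    (hgb : ∀ x, |g x| ≤ C * ‖x‖ ^ p + C) :
    Integrable (fun x => L x * g x) μ := by
  refine (((integrable_norm_rpow (by linarith : 0 ≤ p + 1)).const_mul (‖L‖ * C)).add
    (IsGaussian.integrable_id.norm.const_mul (‖L‖ * C))).mono'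
    ((IsGaussian.integrable_dual μ L).aestronglyMeasurable.mul hg) (ae_of_all _ fun x => ?_)
  calc ‖L x * g x‖ ≤ ‖L‖ * ‖x‖ * (C * ‖x‖ ^ p + C) := by
        rw [norm_mul, Real.norm_eq_abs (g x)]
        exact mul_le_mul (L.le_opNorm x) (hgb x) (abs_nonneg _) (by positivity)
    _ = ‖L‖ * C * ‖x‖ ^ (p + 1) + ‖L‖ * C * ‖id x‖ := by
        rw [Real.rpow_add_one' (norm_nonneg x) (by linarith), id]; ring

end GaussianMoments

theorem integral_dotProduct_mul {ι : Type*} [Fintype ι] {μ : Measure (ι → ℝ)}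
    {g : (ι → ℝ) → ℝ} (hg : ∀ t, Integrable (fun x => x t * g x) μ) (c : ι → ℝ) :
    ∫ x, (c ⬝ᵥ x) * g x ∂μ = c ⬝ᵥ fun t => ∫ x, x t * g x ∂μ := by
  simp only [dotProduct, Finset.sum_mul, mul_assoc]
  rw [integral_finsetSum _ fun t _ => (hg t).const_mul (c t)]
  simp_rw [integral_const_mul]

namespace Matrix

variable {R : Type*} [CommRing R] {n : ℕ}

theorem IsSymm.inv_mulVec_vecMul {ι : Type*} [Fintype ι] [DecidableEq ι] {A : Matrix ι ι R}
    (hA : A.IsSymm) (hdet : IsUnit A.det) (v : ι → R) :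
    (A⁻¹ *ᵥ v) ᵥ* A = v := by
  rw [← mulVec_transpose, hA.eq, mulVec_mulVec, mul_nonsing_inv _ hdet, one_mulVec]

/-- On the `j`-th column of `Ω` this is the Schur complement
`Ω_{jj} - Ω_{j j̄} Ω_{j̄ j̄}⁻¹ Ω_{j̄ j}`. -/
noncomputable def regressionResidual (Ω : Matrix (Fin (n + 1)) (Fin (n + 1)) R) (j : Fin (n + 1))
    (x : Fin (n + 1) → R) : R :=
  x j - (fun l => Ω j (j.succAbove l)) ⬝ᵥ
    ((Ω.submatrix j.succAbove j.succAbove)⁻¹).mulVec (fun l => x (j.succAbove l))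

variable (Ω : Matrix (Fin (n + 1)) (Fin (n + 1)) R) (j : Fin (n + 1))

theorem mulVec_apply_eq_add_sum_succAbove (y : Fin (n + 1) → R) (i : Fin (n + 1)) :
    (Ω *ᵥ y) i = Ω i j * y j + ∑ l, Ω i (j.succAbove l) * y (j.succAbove l) :=
  Fin.sum_univ_succAbove _ j

theorem regressionResidual_mulVec (hS : IsUnit (Ω.submatrix j.succAbove j.succAbove).det)
    (y : Fin (n + 1) → R) :
    regressionResidual Ω j (Ω *ᵥ y) = regressionResidual Ω j (fun t => Ω t j) * y j := by
  have hrest : (fun l => (Ω *ᵥ y) (j.succAbove l)) =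
      y j • (fun l => Ω (j.succAbove l) j) +
        Ω.submatrix j.succAbove j.succAbove *ᵥ fun l => y (j.succAbove l) := by
    ext l
    rw [mulVec_apply_eq_add_sum_succAbove Ω j]
    simp [mulVec, dotProduct, mul_comm]
  have hj : (Ω *ᵥ y) j =
      Ω j j * y j + (fun l => Ω j (j.succAbove l)) ⬝ᵥ fun l => y (j.succAbove l) :=
    mulVec_apply_eq_add_sum_succAbove Ω j y j
  simp only [regressionResidual, hrest, hj, mulVec_add, mulVec_smul, mulVec_mulVec,
    nonsing_inv_mul _ hS, one_mulVec, dotProduct_add, dotProduct_smul, smul_eq_mul]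
  ring

theorem regressionResidual_eq_mul_inv_mulVec (hΩ : IsUnit Ω.det)
    (hS : IsUnit (Ω.submatrix j.succAbove j.succAbove).det) (x : Fin (n + 1) → R) :
    regressionResidual Ω j x = regressionResidual Ω j (fun t => Ω t j) * (Ω⁻¹ *ᵥ x) j := by
  simpa [mulVec_mulVec, mul_nonsing_inv _ hΩ] using regressionResidual_mulVec Ω j hS (Ω⁻¹ *ᵥ x)

theorem isUnit_regressionResidual_col (hΩ : IsUnit Ω.det)
    (hS : IsUnit (Ω.submatrix j.succAbove j.succAbove).det) :
    IsUnit (regressionResidual Ω j (fun t => Ω t j)) := by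
  refine IsUnit.of_mul_eq_one ((Ω⁻¹ *ᵥ Pi.single j 1) j) ?_
  simpa [regressionResidual, ← Pi.zero_def] using
    (regressionResidual_eq_mul_inv_mulVec Ω j hΩ hS (Pi.single j 1)).symm

end Matrix

theorem integral_regressionResidual_mul_div {n : ℕ} {Ω : Matrix (Fin (n + 1)) (Fin (n + 1)) ℝ}
    (hΩ : IsUnit Ω.det) (j : Fin (n + 1))
    (hS : IsUnit (Ω.submatrix j.succAbove j.succAbove).det)
    {μ : Measure (Fin (n + 1) → ℝ)} {g : (Fin (n + 1) → ℝ) → ℝ}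
    (hg : ∀ t, Integrable (fun x => x t * g x) μ) :
    (∫ x, regressionResidual Ω j x * g x ∂μ) / regressionResidual Ω j (fun t => Ω t j) =
      (Ω⁻¹ *ᵥ fun t => ∫ x, x t * g x ∂μ) j := by
  have hres : (fun x => regressionResidual Ω j x * g x) =
      fun x => regressionResidual Ω j (fun t => Ω t j) * ((Ω⁻¹ j ⬝ᵥ x) * g x) := by
    ext x
    rw [regressionResidual_eq_mul_inv_mulVec Ω j hΩ hS x, mul_assoc]
    rfl
  rw [hres, integral_const_mul,
    mul_div_cancel_left₀ _ (isUnit_regressionResidual_col Ω j hΩ hS).ne_zero]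
  exact integral_dotProduct_mul hg _

theorem gaussian_EXf_general (k : ℕ) (Ω : Matrix (Fin (k + 1)) (Fin (k + 1)) ℝ) (hΩ : Ω.PosDef)
    (μ : Measure (Fin (k + 1) → ℝ)) (hμ : IsGaussianVec μ Ω)
    (f : (Fin (k + 1) → ℝ) → ℝ) (hf : Differentiable ℝ f)
    (C p : ℝ) (hp : 0 < p)
    (hfb : ∀ x, |f x| ≤ C * ‖x‖ ^ p + C) :
    ∀ i : Fin (k + 1),
      ∫ x, x i * f x ∂μ =
        ∑ j : Fin (k + 1),
          ((∫ x, (x j - (fun l => Ω j (j.succAbove l)) ⬝ᵥ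
                ((Ω.submatrix j.succAbove j.succAbove)⁻¹).mulVec
                  (fun l => x (j.succAbove l))) * f x ∂μ) /
            (Ω j j - (fun l => Ω j (j.succAbove l)) ⬝ᵥ
                ((Ω.submatrix j.succAbove j.succAbove)⁻¹).mulVec
                  (fun l => Ω (j.succAbove l) j))) * Ω j i := by
  intro i
  change _ = ∑ j, (∫ x, regressionResidual Ω j x * f x ∂μ) /
    regressionResidual Ω j (fun t => Ω t j) * Ω j i
  have : IsGaussian μ := hμ.isGaussian
  have hint (t : Fin (k + 1)) : Integrable (fun x => x t * f x) μ :=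
    IsGaussian.integrable_dual_mul_of_abs_le (ContinuousLinearMap.proj t)
      hf.continuous.aestronglyMeasurable hp.le hfb
  have hdet : IsUnit Ω.det := (isUnit_iff_isUnit_det Ω).mp hΩ.isUnit
  have hS (j : Fin (k + 1)) : IsUnit (Ω.submatrix j.succAbove j.succAbove).det :=
    (isUnit_iff_isUnit_det _).mp (hΩ.submatrix Fin.succAbove_right_injective).isUnit
  simp_rw [integral_regressionResidual_mul_div hdet _ (hS _) hint]
  exact (congrFun ((isHermitian_iff_isSymm.mp hΩ.isHermitian).inv_mulVec_vecMul hdet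
    fun t => ∫ x, x t * f x ∂μ) i).symm

/-- Stein-type identity: for a centered nondegenerate Gaussian `X ∈ ℝ^k` with covariance `Ω`
and a differentiable, polynomially bounded `f` with polynomially bounded derivative,
`E[Xᵢ f(X)] = ∑ⱼ aⱼ Ω_{ji}` where
`aⱼ = E[(Xⱼ - Ω_{j j̄} Ω_{j̄ j̄}⁻¹ X_{j̄}) f(X)] / (Ω_{jj} - Ω_{j j̄} Ω_{j̄ j̄}⁻¹ Ω_{j̄ j})`
does not depend on `i`.  (Here the dimension is `k + 1` so that removing one index makes sense.) -/
theorem gaussian_EXf (k : ℕ) (Ω : Matrix (Fin (k + 1)) (Fin (k + 1)) ℝ) (hΩ : Ω.PosDef)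
    (μ : Measure (Fin (k + 1) → ℝ)) (hμ : IsGaussianVec μ Ω)
    (f : (Fin (k + 1) → ℝ) → ℝ) (hf : Differentiable ℝ f)
    (C p : ℝ) (hC : 0 < C) (hp : 0 < p)
    (hfb : ∀ x, |f x| ≤ C * ‖x‖ ^ p + C)
    (hfd : ∀ x, ‖fderiv ℝ f x‖ ≤ C * ‖x‖ ^ p + C) :
    ∀ i : Fin (k + 1),
      ∫ x, x i * f x ∂μ =
        ∑ j : Fin (k + 1),
          ((∫ x, (x j - (fun l => Ω j (j.succAbove l)) ⬝ᵥ
                ((Ω.submatrix j.succAbove j.succAbove)⁻¹).mulVec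
                  (fun l => x (j.succAbove l))) * f x ∂μ) /
            (Ω j j - (fun l => Ω j (j.succAbove l)) ⬝ᵥ
                ((Ω.submatrix j.succAbove j.succAbove)⁻¹).mulVec
                  (fun l => Ω (j.succAbove l) j))) * Ω j i :=
  gaussian_EXf_general k Ω hΩ μ hμ f hf C p hp hfb
end

section
/- Let Π ∈ ℝ^{n×n} be an orthogonal projection matrix of rank k whose diagonal entries are all strictly positive. Let D = Diag(Π) be the diagonal matrix of the diagonal entries of Π, and let C = D^{-1/2} Π D^{-1/2} be the associated correlation matrix. Then with r = n − k, the off-diagonal entries of C satisfy ∑_{i<j} C_{ij}² ≤ 0.5 · (r² + r). -/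
/-!
Write `a i = P i i`. For a symmetric idempotent `P` the rows satisfy `∑ j, P i j ^ 2 = a i`, so
Cauchy–Schwarz gives `P i j ^ 2 ≤ a i * a j` and in particular `a i ≤ 1`. With
`t i = (a i)⁻¹ - 1 ≥ 0` we have `t i * a i = 1 - a i` and
`1 / (a i * a j) = (1 + t i) * (1 + t j)`, so `∑ i j, P i j ^ 2 / (a i * a j)` expands to
`k + 2 r + ∑ i j, t i * t j * P i j ^ 2`, and the last sum is at most
`(∑ i, t i * a i) ^ 2 = r ^ 2`. The diagonal of the correlation matrix
contributes `n` to the full sum and the two strict triangles contribute equally.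
-/

open Finset

theorem Fintype.sum_sum_eq_sum_diag_add_two_mul_sum_lt {ι R : Type*} [Fintype ι] [LinearOrder ι]
    [Semiring R] (f : ι → ι → R) (hf : ∀ i j, f i j = f j i) :
    ∑ i, ∑ j, f i j =
      ∑ i, f i i + 2 * ∑ q ∈ univ.filter (fun q : ι × ι => q.1 < q.2), f q.1 q.2 := by
  have hswap : ∑ q ∈ univ.filter (fun q : ι × ι => q.1 < q.2), f q.1 q.2 =
      ∑ q ∈ univ.filter (fun q : ι × ι => q.2 < q.1), f q.1 q.2 :=
    Finset.sum_equiv (Equiv.prodComm ι ι) (by simp) (fun q _ => hf _ _)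
  rw [two_mul]
  nth_rw 2 [hswap]
  rw [Finset.sum_filter, Finset.sum_filter, ← Finset.sum_add_distrib, Fintype.sum_prod_type]
  simp_rw [← Finset.sum_add_distrib]
  refine Finset.sum_congr rfl fun i _ => ?_
  rw [← Fintype.sum_ite_eq i (f i), ← Finset.sum_add_distrib]
  refine Finset.sum_congr rfl fun j _ => ?_
  rcases lt_trichotomy i j with h | rfl | h
  · simp [h, h.ne, h.not_gt]
  · simp
  · simp [h, h.ne', h.not_gt]

namespace Matrix

variable {ι : Type*} [Fintype ι] {P : Matrix ι ι ℝ}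

theorem IsSymm.sum_mul_apply_eq_of_isIdempotentElem (hsym : P.IsSymm) (hP : IsIdempotentElem P)
    (i j : ι) : ∑ l, P i l * P j l = P i j := by
  conv_rhs => rw [← hP.eq, mul_apply]
  simp_rw [hsym.apply]

theorem IsSymm.sum_sq_apply_eq_diag (hsym : P.IsSymm) (hP : IsIdempotentElem P) (i : ι) :
    ∑ j, P i j ^ 2 = P i i := by
  simpa only [sq] using hsym.sum_mul_apply_eq_of_isIdempotentElem hP i i

theorem IsSymm.sq_apply_le_diag_mul_diag (hsym : P.IsSymm) (hP : IsIdempotentElem P) (i j : ι) :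
    P i j ^ 2 ≤ P i i * P j j := by
  rw [← hsym.sum_mul_apply_eq_of_isIdempotentElem hP, ← hsym.sum_sq_apply_eq_diag hP i,
    ← hsym.sum_sq_apply_eq_diag hP j]
  exact sum_mul_sq_le_sq_mul_sq _ _ _

theorem IsSymm.diag_le_one (hsym : P.IsSymm) (hP : IsIdempotentElem P) (i : ι) : P i i ≤ 1 := by
  have h : P i i ^ 2 ≤ ∑ j, P i j ^ 2 :=
    single_le_sum (f := fun j => P i j ^ 2) (fun j _ => sq_nonneg _) (mem_univ i)
  rw [hsym.sum_sq_apply_eq_diag hP i] at h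
  nlinarith

theorem IsSymm.sum_sum_mul_mul_sq_le (hsym : P.IsSymm) (hP : IsIdempotentElem P) {t : ι → ℝ}
    (ht : ∀ i, 0 ≤ t i) : ∑ i, ∑ j, t i * t j * P i j ^ 2 ≤ (∑ i, t i * P i i) ^ 2 :=
  calc ∑ i, ∑ j, t i * t j * P i j ^ 2 ≤ ∑ i, ∑ j, t i * P i i * (t j * P j j) := by
        refine sum_le_sum fun i _ => sum_le_sum fun j _ => ?_
        rw [mul_mul_mul_comm]
        exact mul_le_mul_of_nonneg_left (hsym.sq_apply_le_diag_mul_diag hP i j)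
          (mul_nonneg (ht i) (ht j))
    _ = (∑ i, t i * P i i) ^ 2 := by rw [sq, sum_mul_sum]

theorem IsSymm.sum_sum_sq_div_diag_mul_diag_le (hsym : P.IsSymm) (hP : IsIdempotentElem P)
    (hpos : ∀ i, 0 < P i i) :
    ∑ i, ∑ j, P i j ^ 2 / (P i i * P j j) ≤
      P.trace + 2 * (Fintype.card ι - P.trace) + (Fintype.card ι - P.trace) ^ 2 := by
  set t : ι → ℝ := fun i => (P i i)⁻¹ - 1
  have ht : ∀ i, 0 ≤ t i := fun i =>
    sub_nonneg.2 ((one_le_inv₀ (hpos i)).2 (hsym.diag_le_one hP i))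
  have hexpand : ∀ i j, P i j ^ 2 / (P i i * P j j) =
      P i j ^ 2 + t i * P i j ^ 2 + t j * P i j ^ 2 + t i * t j * P i j ^ 2 := by
    intro i j
    have hi := (hpos i).ne'
    have hj := (hpos j).ne'
    simp only [t]
    field_simp
    ring
  have hrows : ∑ i, ∑ j, t i * P i j ^ 2 = ∑ i, t i * P i i := by
    simp_rw [← mul_sum, hsym.sum_sq_apply_eq_diag hP]
  have hcols : ∑ i, ∑ j, t j * P i j ^ 2 = ∑ i, t i * P i i := by
    rw [sum_comm, ← hrows]
    simp_rw [hsym.apply]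
  have hweight : ∑ i, t i * P i i = Fintype.card ι - P.trace := by
    have : ∀ i, t i * P i i = 1 - P i i := fun i => by
      simp only [t, sub_mul, inv_mul_cancel₀ (hpos i).ne', one_mul]
    simp_rw [this, sum_sub_distrib, sum_const, card_univ, nsmul_one]
    rfl
  simp_rw [hexpand, sum_add_distrib, hsym.sum_sq_apply_eq_diag hP, hrows, hcols, hweight]
  have hcross := hsym.sum_sum_mul_mul_sq_le hP ht
  rw [hweight] at hcross
  rw [show ∑ i, P i i = P.trace from rfl]
  linarith

theorem trace_eq_rank_of_isIdempotentElem {ι K : Type*} [Fintype ι] [DecidableEq ι] [Field K]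
    {P : Matrix ι ι K} (hP : IsIdempotentElem P) : P.trace = P.rank := by
  rw [← trace_toLin'_eq, rank, ← toLin'_apply']
  exact (LinearMap.IsIdempotentElem.isProj_range _ (hP.map toLinAlgEquiv')).trace

end Matrix

/-- Let `P` be an `n × n` orthogonal projection matrix (symmetric idempotent) of rank `k`
with strictly positive diagonal, and let `C = D^{-1/2} P D^{-1/2}` be the associated
correlation matrix, `D = Diag(P)`.  Then with `r = n - k`,
`∑_{i<j} Cᵢⱼ² ≤ 0.5 (r² + r)`. -/
theorem projectionCorrelation (n k : ℕ) (P : Matrix (Fin n) (Fin n) ℝ)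
    (hsym : P.IsSymm) (hidem : P * P = P) (hrank : P.rank = k)
    (hdiag : ∀ i, 0 < P i i) :
    ∑ q ∈ Finset.univ.filter (fun q : Fin n × Fin n => q.1 < q.2),
        (P q.1 q.2 / (Real.sqrt (P q.1 q.1) * Real.sqrt (P q.2 q.2))) ^ 2 ≤
      0.5 * (((n : ℝ) - k) ^ 2 + ((n : ℝ) - k)) := by
  have hcorr : ∀ i j, (P i j / (√(P i i) * √(P j j))) ^ 2 = P i j ^ 2 / (P i i * P j j) :=
    fun i j => by rw [div_pow, mul_pow, Real.sq_sqrt (hdiag i).le, Real.sq_sqrt (hdiag j).le]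
  have hsplit := Fintype.sum_sum_eq_sum_diag_add_two_mul_sum_lt
    (fun i j => P i j ^ 2 / (P i i * P j j)) fun i j => by rw [hsym.apply, mul_comm (P j j)]
  have hdiagonal : ∑ i, P i i ^ 2 / (P i i * P i i) = n := by
    simp [← sq, fun i => (hdiag i).ne']
  have hbound := hsym.sum_sum_sq_div_diag_mul_diag_le hidem hdiag
  rw [Matrix.trace_eq_rank_of_isIdempotentElem hidem, hrank, Fintype.card_fin] at hbound
  simp_rw [hcorr]
  norm_num
  linarith
end

section
/- Let X = (X_1, X_2) be a random vector in ℝ^a × ℝ^b and Y a random vector in ℝ^c, defined on a common probability space, such that X_2 = g(Y) almost surely for some measurable function g : ℝ^c → ℝ^b. Let λ denote Lebesgue measure (on the Euclidean space appropriate to the context). Assume: (i) for every measurable set U ⊆ ℝ^b, P(X_2 ∈ U) = 0 if and only if λ(U) = 0; and (ii) there is a regular conditional distribution κ of X_1 given Y such that for every y ∈ ℝ^c and every measurable U ⊆ ℝ^a, κ(y, U) = 0 if and only if λ(U) = 0. Then for every measurable set V ⊆ ℝ^a × ℝ^b, P(X ∈ V) = 0 if and only if λ(V) = 0. -/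
open MeasureTheory ProbabilityTheory

/-!
The hypothesis on `κ` identifies the law of `(Y, X₁)` with `P_Y ⊗ κ`, so, since `X₂ = g(Y)`
almost surely, `P(X ∈ V) = ∫ κ(y, V^{g(y)}) dP_Y(y)` with `V^z = {x | (x, z) ∈ V}`. This vanishes
iff `λ(V^{g(y)}) = 0` for `P_Y`-a.e. `y`, i.e. iff `λ(V^z) = 0` for `P_{X₂}`-a.e. `z`. As `P_{X₂}`
and `λ` have the same null sets, this says `λ(V^z) = 0` for `λ`-a.e. `z`, which by Tonelli means
`λ(V) = 0`.
-/

namespace MeasureTheory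

variable {α β γ : Type*} [MeasurableSpace α] [MeasurableSpace β] [MeasurableSpace γ]

lemma ae_eq_ae_of_null_iff {μ ν : Measure α}
    (h : ∀ s, MeasurableSet s → (μ s = 0 ↔ ν s = 0)) : ae μ = ae ν :=
  le_antisymm
    (Measure.ae_le_iff_absolutelyContinuous.2 <| .mk fun s hs ↦ (h s hs).2)
    (Measure.ae_le_iff_absolutelyContinuous.2 <| .mk fun s hs ↦ (h s hs).1)

lemma Measure.measure_prod_null_right {μ : Measure α} [SFinite μ] {ν : Measure β} [SFinite ν]
    {s : Set (α × β)} (hs : MeasurableSet s) :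
    μ.prod ν s = 0 ↔ (fun y ↦ μ ((fun x ↦ (x, y)) ⁻¹' s)) =ᵐ[ν] 0 := by
  rw [Measure.prod_apply_symm hs, lintegral_eq_zero_iff (measurable_measure_prodMk_right hs)]

lemma Measure.map_prodMk_eq_compProd {Ω : Type*} [MeasurableSpace Ω] {P : Measure Ω}
    [IsFiniteMeasure P] {X : Ω → α} {Y : Ω → β} (hX : Measurable X) (hY : Measurable Y)
    {κ : Kernel β α} [IsSFiniteKernel κ]
    (hκ : ∀ U, MeasurableSet U → ∀ B, MeasurableSet B →
      P {ω | X ω ∈ U ∧ Y ω ∈ B} = ∫⁻ y in B, κ y U ∂(P.map Y)) :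
    P.map (fun ω ↦ (Y ω, X ω)) = P.map Y ⊗ₘ κ := by
  have hrect {B : Set β} {U : Set α} (hB : MeasurableSet B) (hU : MeasurableSet U) :
      P.map (fun ω ↦ (Y ω, X ω)) (B ×ˢ U) = (P.map Y ⊗ₘ κ) (B ×ˢ U) := by
    rw [Measure.map_apply (hY.prodMk hX) (hB.prod hU), Measure.compProd_apply_prod hB hU,
      ← hκ U hU B hB]
    congr 1 with ω
    exact and_comm
  refine ext_of_generate_finite _ generateFrom_prod.symm isPiSystem_prod ?_ ?_
  · rintro _ ⟨B, hB, U, hU, rfl⟩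
    exact hrect hB hU
  · simpa using hrect .univ .univ

lemma Measure.compProd_preimage_null_iff_prod_null {μ : Measure β} [SFinite μ]
    {κ : Kernel β α} [IsSFiniteKernel κ] {ν : Measure α} [SFinite ν] {ρ : Measure γ} [SFinite ρ]
    {g : β → γ} (hg : Measurable g) (hκ : ∀ y, ae (κ y) = ae ν) (hgμ : ae (μ.map g) = ae ρ)
    {V : Set (α × γ)} (hV : MeasurableSet V) :
    (μ ⊗ₘ κ) {p | (p.2, g p.1) ∈ V} = 0 ↔ ν.prod ρ V = 0 := by
  set N := {z | ν ((fun x ↦ (x, z)) ⁻¹' V) = 0}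
  have hN : MeasurableSet N := measurable_measure_prodMk_right hV (measurableSet_singleton 0)
  have hW : MeasurableSet {p : β × α | (p.2, g p.1) ∈ V} :=
    (measurable_snd.prodMk (hg.comp measurable_fst)) hV
  calc (μ ⊗ₘ κ) {p | (p.2, g p.1) ∈ V} = 0
      ↔ ∀ᵐ y ∂μ, ∀ᵐ x ∂κ y, (x, g y) ∉ V := by
        rw [measure_eq_zero_iff_ae_notMem, Measure.ae_compProd_iff hW.compl]; rfl
    _ ↔ ∀ᵐ y ∂μ, g y ∈ N := by
        refine Filter.eventually_congr (.of_forall fun y ↦ ?_)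
        rw [hκ y]
        exact measure_eq_zero_iff_ae_notMem.symm
    _ ↔ ∀ᵐ z ∂ρ, z ∈ N := by rw [← hgμ]; exact (ae_map_iff hg.aemeasurable hN).symm
    _ ↔ ν.prod ρ V = 0 := (Measure.measure_prod_null_right hV).symm

end MeasureTheory

/-- Conditional density lemma: let `X = (X₁, X₂)` be a random vector in `ℝ^a × ℝ^b` and `Y`
a random vector in `ℝ^c`, with `X₂ = g(Y)` almost surely.  Suppose (i) the law of `X₂` and
Lebesgue measure are mutually absolutely continuous, and (ii) there is a regular conditional
distribution `κ` of `X₁` given `Y` such that for every `y`, `κ(y, ·)` and Lebesgue measure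
are mutually absolutely continuous.  Then the law of `X` and Lebesgue measure on
`ℝ^a × ℝ^b` are mutually absolutely continuous. -/
theorem conditionalDensity (a b c : ℕ) {Ω : Type*} [MeasurableSpace Ω]
    (P : Measure Ω) [IsProbabilityMeasure P]
    (X₁ : Ω → (Fin a → ℝ)) (X₂ : Ω → (Fin b → ℝ)) (Y : Ω → (Fin c → ℝ))
    (hX₁ : Measurable X₁) (hX₂ : Measurable X₂) (hY : Measurable Y)
    (g : (Fin c → ℝ) → (Fin b → ℝ)) (hg : Measurable g)
    (hX₂Y : ∀ᵐ ω ∂P, X₂ ω = g (Y ω))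
    (hX₂dens : ∀ U : Set (Fin b → ℝ), MeasurableSet U →
      (P {ω | X₂ ω ∈ U} = 0 ↔ volume U = 0))
    (κ : Kernel (Fin c → ℝ) (Fin a → ℝ)) [IsMarkovKernel κ]
    (hκ : ∀ U : Set (Fin a → ℝ), MeasurableSet U →
      ∀ B : Set (Fin c → ℝ), MeasurableSet B →
        P {ω | X₁ ω ∈ U ∧ Y ω ∈ B} = ∫⁻ y in B, κ y U ∂(Measure.map Y P))
    (hκdens : ∀ y, ∀ U : Set (Fin a → ℝ), MeasurableSet U → (κ y U = 0 ↔ volume U = 0)) :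
    ∀ V : Set ((Fin a → ℝ) × (Fin b → ℝ)), MeasurableSet V →
      (P {ω | (X₁ ω, X₂ ω) ∈ V} = 0 ↔ volume V = 0) := by
  intro V hV
  have hlaw : P.map (fun ω ↦ (Y ω, X₁ ω)) = P.map Y ⊗ₘ κ :=
    Measure.map_prodMk_eq_compProd hX₁ hY hκ
  have hX₂law : (P.map Y).map g = P.map X₂ := by
    rw [Measure.map_map hg hY]
    exact Measure.map_congr (hX₂Y.mono fun ω h ↦ h.symm)
  have hW : MeasurableSet {p : (Fin c → ℝ) × (Fin a → ℝ) | (p.2, g p.1) ∈ V} :=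
    (measurable_snd.prodMk (hg.comp measurable_fst)) hV
  have hPV : P {ω | (X₁ ω, X₂ ω) ∈ V} = (P.map Y ⊗ₘ κ) {p | (p.2, g p.1) ∈ V} := by
    rw [← hlaw, Measure.map_apply (hY.prodMk hX₁) hW]
    exact measure_congr <| hX₂Y.mono fun ω h ↦
      show ((X₁ ω, X₂ ω) ∈ V) = ((X₁ ω, g (Y ω)) ∈ V) by rw [h]
  have hX₂ae : ae ((P.map Y).map g) = ae volume := by
    rw [hX₂law]
    exact ae_eq_ae_of_null_iff fun U hU ↦ by rw [Measure.map_apply hX₂ hU]; exact hX₂dens U hU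
  rw [hPV, Measure.volume_eq_prod, Measure.compProd_preimage_null_iff_prod_null hg
    (fun y ↦ ae_eq_ae_of_null_iff (hκdens y)) hX₂ae hV]
end

section
/- Fix an integer m ≥ 1, an integer p ≥ 1, and a constant C > 0. Let ψ : ℝ^m → ℝ be measurable with |ψ(x)| ≤ C · ∑_{i=1}^m |x_i|^p + C for all x ∈ ℝ^m. Fix a = (a_1, …, a_{m−1}) ∈ ℝ^{m−1}, and for w ∈ ℝ and τ² > 0 define Ψ(w; τ²) := E_{z∼N(0,1)}[ψ(a_1, …, a_{m−1}, w + τ z)]. Then there exists a constant R > 0, depending only on p and C, such that for all w, Δw ∈ ℝ, all τ² > 0, and all Δτ² ≥ 0: |Ψ(w + Δw; τ² + Δτ²) − Ψ(w; τ²)| ≤ R · (|Δw| + Δτ²) · (1 + τ^{−2}) · (S + |w|^p + |Δw|^p + τ^p + (Δτ²)^{p/2}), where S := 1 + |a_1|^p + ⋯ + |a_{m−1}|^p. -/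
/-!
Write `Ψ(w; t) = ∫ g y φ_{w,t}(y) dy` with `g = ψ(a, ·)` and `φ_{μ,v}` the density of `N(μ, v)`,
and move the parameters along the segment `(μ, v) = (w + θ Δw, t + θ Δt)`, `θ ∈ [0, 1]`.
Since `g` grows polynomially and the Gaussian tails are locally uniform in `(μ, v)`, one may
differentiate under the integral: `∂_θ φ = φ s` with the score
`s = Δw (y - μ) / v + Δt ((y - μ)² - v) / (2 v²)`. Substituting `y = μ + √v z` back, the
derivative is `E[g(μ + √v z) (Δw z / √v + Δt (z² - 1) / (2 v))]`, which is at most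
`(|Δw| + Δt)(1 + t⁻¹)` times `E[(1 + |z|)^(p+2)]` times the polynomial size of the parameters.
The mean value theorem on `[0, 1]` concludes.
-/

open MeasureTheory ProbabilityTheory Real Filter Topology

lemma add_pow_le_two_pow_mul {a b : ℝ} (ha : 0 ≤ a) (hb : 0 ≤ b) (n : ℕ) :
    (a + b) ^ n ≤ 2 ^ n * (a ^ n + b ^ n) :=
  (add_pow_le ha hb n).trans <| by
    gcongr
    · norm_num
    · omega

noncomputable def gaussianDensity (μ v y : ℝ) : ℝ :=
  (√(2 * π * v))⁻¹ * exp (-(y - μ) ^ 2 / (2 * v))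

/-- The derivative of `log gaussianDensity μ v y` in the direction `(a, b)` of `(μ, v)`. -/
noncomputable def gaussianScore (a b μ v y : ℝ) : ℝ :=
  a * (y - μ) / v + b * ((y - μ) ^ 2 - v) / (2 * v ^ 2)

lemma gaussianPDFReal_toNNReal (μ v : ℝ) :
    gaussianPDFReal μ v.toNNReal = gaussianDensity μ v := by
  ext y
  rcases le_or_gt v 0 with hv | hv
  · simp [gaussianDensity, Real.toNNReal_of_nonpos hv,
      Real.sqrt_eq_zero'.mpr (mul_nonpos_of_nonneg_of_nonpos (by positivity : (0:ℝ) ≤ 2 * π) hv)]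
  · simp [gaussianPDFReal, gaussianDensity, hv.le]

lemma gaussianDensity_nonneg (μ v y : ℝ) : 0 ≤ gaussianDensity μ v y := by
  unfold gaussianDensity; positivity

@[fun_prop]
lemma measurable_gaussianDensity (μ v : ℝ) : Measurable (gaussianDensity μ v) := by
  unfold gaussianDensity; fun_prop

@[fun_prop]
lemma measurable_gaussianScore (a b μ v : ℝ) : Measurable (gaussianScore a b μ v) := by
  unfold gaussianScore; fun_prop

lemma hasDerivAt_gaussianDensity_affine (μ a v b y θ : ℝ) (hv : 0 < v + θ * b) :
    HasDerivAt (fun θ => gaussianDensity (μ + θ * a) (v + θ * b) y)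
      (gaussianDensity (μ + θ * a) (v + θ * b) y *
        gaussianScore a b (μ + θ * a) (v + θ * b) y) θ := by
  have hμ : HasDerivAt (fun θ => μ + θ * a) a θ := by
    simpa using ((hasDerivAt_id θ).mul_const a).const_add μ
  have hvar : HasDerivAt (fun θ => v + θ * b) b θ := by
    simpa using ((hasDerivAt_id θ).mul_const b).const_add v
  have h2π : 0 < 2 * π * (v + θ * b) := by positivity
  have hsqrt := ((hvar.const_mul (2 * π)).sqrt h2π.ne').inv (Real.sqrt_pos.mpr h2π).ne'
  have hexp := ((((hμ.const_sub y).pow 2).neg).div (hvar.const_mul 2) (by positivity)).exp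
  unfold gaussianDensity gaussianScore
  refine (hsqrt.mul hexp).congr_deriv ?_
  have hs : √(2 * π * (v + θ * b)) ^ 2 = 2 * π * (v + θ * b) := Real.sq_sqrt h2π.le
  simp only [Pi.pow_apply, Pi.neg_apply, Pi.div_apply, Pi.inv_apply, hs]
  field_simp
  ring

lemma gaussianDensity_le {M v₀ v₁ μ v : ℝ} (hv₀ : 0 < v₀) (hμ : |μ| ≤ M) (h₀ : v₀ ≤ v)
    (h₁ : v ≤ v₁) (y : ℝ) :
    gaussianDensity μ v y ≤
      (√(2 * π * v₀))⁻¹ * exp (M ^ 2 / (2 * v₀)) * exp (-(4 * v₁)⁻¹ * y ^ 2) := by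
  have hv : 0 < v := hv₀.trans_le h₀
  have hμ2 : μ ^ 2 ≤ M ^ 2 := by
    simpa only [sq_abs] using pow_le_pow_left₀ (abs_nonneg μ) hμ 2
  -- `(y - μ)² = y²/2 - μ² + (y - 2μ)²/2`
  have hsq : y ^ 2 / 2 - M ^ 2 ≤ (y - μ) ^ 2 := by nlinarith [sq_nonneg (y - 2 * μ)]
  have hexp : -(y - μ) ^ 2 / (2 * v) ≤ M ^ 2 / (2 * v₀) + -(4 * v₁)⁻¹ * y ^ 2 :=
    calc -(y - μ) ^ 2 / (2 * v) ≤ -(y ^ 2 / 2 - M ^ 2) / (2 * v) := by gcongr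
      _ = M ^ 2 / (2 * v) - y ^ 2 / (4 * v) := by field_simp; ring
      _ ≤ M ^ 2 / (2 * v₀) - y ^ 2 / (4 * v₁) := by gcongr
      _ = M ^ 2 / (2 * v₀) + -(4 * v₁)⁻¹ * y ^ 2 := by ring
  rw [mul_assoc, ← exp_add]
  unfold gaussianDensity
  gcongr

lemma abs_gaussianScore_le {M v₀ v₁ μ v : ℝ} (a b : ℝ) (hv₀ : 0 < v₀) (hμ : |μ| ≤ M)
    (h₀ : v₀ ≤ v) (h₁ : v ≤ v₁) (y : ℝ) :
    |gaussianScore a b μ v y| ≤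
      (|a| * (1 + M) / v₀ + |b| * ((1 + M) ^ 2 + v₁) / (2 * v₀ ^ 2)) * (1 + |y|) ^ 2 := by
  have hv : 0 < v := hv₀.trans_le h₀
  have hM : 0 ≤ M := (abs_nonneg μ).trans hμ
  have hy : |y - μ| ≤ (1 + M) * (1 + |y|) := by
    have := abs_sub y μ
    nlinarith [abs_nonneg y]
  have hy2 : (y - μ) ^ 2 ≤ (1 + M) ^ 2 * (1 + |y|) ^ 2 := by
    rw [← sq_abs, ← mul_pow]; gcongr
  have h1 : |y| ≤ (1 + |y|) ^ 2 := by nlinarith [abs_nonneg y]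
  have h2 : 1 ≤ (1 + |y|) ^ 2 := one_le_pow₀ (by linarith [abs_nonneg y])
  unfold gaussianScore
  calc |a * (y - μ) / v + b * ((y - μ) ^ 2 - v) / (2 * v ^ 2)|
      ≤ |a| * |y - μ| / v + |b| * ((y - μ) ^ 2 + v) / (2 * v ^ 2) := by
        refine (abs_add_le _ _).trans (add_le_add ?_ ?_)
        · rw [abs_div, abs_mul, abs_of_pos hv]
        · rw [abs_div, abs_mul, abs_of_pos (by positivity : (0:ℝ) < 2 * v ^ 2)]
          gcongr
          exact (abs_sub _ _).trans (by rw [abs_of_pos hv, abs_of_nonneg (sq_nonneg _)])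
    _ ≤ |a| * ((1 + M) * (1 + |y|) ^ 2) / v₀ +
          |b| * ((1 + M) ^ 2 * (1 + |y|) ^ 2 + v₁ * (1 + |y|) ^ 2) / (2 * v₀ ^ 2) := by
        gcongr
        · exact hy.trans (by gcongr; nlinarith [abs_nonneg y])
        · exact mul_nonneg (abs_nonneg b) (add_nonneg (by positivity) (by nlinarith))
        · nlinarith
    _ = _ := by ring

lemma integrable_one_add_abs_pow_mul_exp_neg_mul_sq (k : ℕ) {b : ℝ} (hb : 0 < b) :
    Integrable fun y : ℝ => (1 + |y|) ^ k * exp (-b * y ^ 2) := by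
  have hmoment (n : ℕ) : Integrable fun y : ℝ => |y| ^ n * exp (-b * y ^ 2) := by
    simpa [abs_mul, abs_pow, rpow_natCast] using
      (integrable_rpow_mul_exp_neg_mul_sq hb (s := n) (by linarith [n.cast_nonneg (α := ℝ)])).abs
  simp_rw [add_comm (1 : ℝ), add_pow, one_pow, mul_one, Finset.sum_mul]
  exact integrable_finsetSum _ fun n _ => by
    simpa [mul_right_comm] using (hmoment n).mul_const (k.choose n : ℝ)

lemma integrable_one_add_abs_pow_gaussianReal (k : ℕ) (μ : ℝ) (v : NNReal) :
    Integrable (fun z : ℝ => (1 + |z|) ^ k) (gaussianReal μ v) := by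
  refine ((memLp_const (1 : ℝ)).add
    (memLp_id_gaussianReal (μ := μ) (v := v) k).norm).integrable_norm_pow'.congr (ae_of_all _ ?_)
  intro z
  simp [abs_of_nonneg (by positivity : 0 ≤ 1 + |z|)]

lemma exists_integrable_bound_gaussianDensity (k : ℕ) (a b M : ℝ) {v₀ v₁ : ℝ} (hv₀ : 0 < v₀)
    (h₀₁ : v₀ ≤ v₁) :
    ∃ h : ℝ → ℝ, Integrable h ∧ ∀ μ v y, |μ| ≤ M → v₀ ≤ v → v ≤ v₁ →
      (1 + |y|) ^ k * gaussianDensity μ v y * (1 + |gaussianScore a b μ v y|) ≤ h y := by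
  set D := (√(2 * π * v₀))⁻¹ * exp (M ^ 2 / (2 * v₀))
  set c := |a| * (1 + M) / v₀ + |b| * ((1 + M) ^ 2 + v₁) / (2 * v₀ ^ 2)
  refine ⟨fun y => D * (1 + c) * ((1 + |y|) ^ (k + 2) * exp (-(4 * v₁)⁻¹ * y ^ 2)),
    (integrable_one_add_abs_pow_mul_exp_neg_mul_sq (k + 2)
      (inv_pos.mpr (by linarith))).const_mul _,
    fun μ v y hμ h₀ h₁ => ?_⟩
  have hy : 1 ≤ (1 + |y|) ^ 2 := one_le_pow₀ (by linarith [abs_nonneg y])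
  have hscore : 1 + |gaussianScore a b μ v y| ≤ (1 + c) * (1 + |y|) ^ 2 := by
    nlinarith [abs_gaussianScore_le a b hv₀ hμ h₀ h₁ y]
  calc (1 + |y|) ^ k * gaussianDensity μ v y * (1 + |gaussianScore a b μ v y|)
      ≤ (1 + |y|) ^ k * (D * exp (-(4 * v₁)⁻¹ * y ^ 2)) * ((1 + c) * (1 + |y|) ^ 2) := by
        gcongr ?_ * ?_
        · exact mul_le_mul_of_nonneg_left (gaussianDensity_le hv₀ hμ h₀ h₁ y) (by positivity)
    _ = _ := by ring

lemma hasDerivAt_integral_mul_gaussianDensity {g : ℝ → ℝ} (hg : Measurable g) {C : ℝ} {k : ℕ}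
    (hgb : ∀ y, |g y| ≤ C * (1 + |y|) ^ k) (μ a v b : ℝ) {θ : ℝ} (hv : 0 < v + θ * b) :
    HasDerivAt (fun θ => ∫ y, g y * gaussianDensity (μ + θ * a) (v + θ * b) y)
      (∫ y, g y * (gaussianDensity (μ + θ * a) (v + θ * b) y *
        gaussianScore a b (μ + θ * a) (v + θ * b) y)) θ := by
  have hC : 0 ≤ C := by simpa using (abs_nonneg _).trans (hgb 0)
  obtain ⟨h, hh, hbound⟩ := exists_integrable_bound_gaussianDensity k a b (|μ + θ * a| + 1)
    (v₁ := 2 * (v + θ * b)) (half_pos hv) (by linarith)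
  have hnear : ∀ᶠ θ' in 𝓝 θ, 0 < v + θ' * b ∧ ∀ y,
      |g y| * gaussianDensity (μ + θ' * a) (v + θ' * b) y *
        (1 + |gaussianScore a b (μ + θ' * a) (v + θ' * b) y|) ≤ C * h y := by
    have hμ : ∀ᶠ θ' in 𝓝 θ, |μ + θ' * a| < |μ + θ * a| + 1 :=
      ContinuousAt.eventually_lt (by fun_prop) (by fun_prop) (by linarith)
    have hv₀ : ∀ᶠ θ' in 𝓝 θ, (v + θ * b) / 2 < v + θ' * b :=
      ContinuousAt.eventually_lt (by fun_prop) (by fun_prop) (by linarith)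
    have hv₁ : ∀ᶠ θ' in 𝓝 θ, v + θ' * b < 2 * (v + θ * b) :=
      ContinuousAt.eventually_lt (by fun_prop) (by fun_prop) (by linarith)
    filter_upwards [hμ, hv₀, hv₁] with θ' h₁ h₂ h₃
    refine ⟨by linarith, fun y => ?_⟩
    calc _ ≤ C * ((1 + |y|) ^ k * gaussianDensity (μ + θ' * a) (v + θ' * b) y *
          (1 + |gaussianScore a b (μ + θ' * a) (v + θ' * b) y|)) := by
          rw [← mul_assoc, ← mul_assoc]
          gcongr
          · exact gaussianDensity_nonneg _ _ _
          · exact hgb y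
      _ ≤ C * h y := by gcongr; exact hbound _ _ y h₁.le h₂.le h₃.le
  refine (hasDerivAt_integral_of_dominated_loc_of_deriv_le (bound := fun y => C * h y)
    (F := fun θ y => g y * gaussianDensity (μ + θ * a) (v + θ * b) y)
    (F' := fun θ y => g y * (gaussianDensity (μ + θ * a) (v + θ * b) y *
      gaussianScore a b (μ + θ * a) (v + θ * b) y))
    hnear (.of_forall fun θ' => by fun_prop)
    ((hh.const_mul C).mono' (by fun_prop) (ae_of_all _ fun y => ?_)) (by fun_prop)
    (ae_of_all _ fun y θ' hθ' => ?_) (hh.const_mul C) (ae_of_all _ fun y θ' hθ' => ?_)).2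
  · refine le_trans ?_ (hnear.self_of_nhds.2 y)
    rw [norm_mul, Real.norm_eq_abs, Real.norm_eq_abs, abs_of_nonneg (gaussianDensity_nonneg _ _ _)]
    exact le_mul_of_one_le_right (mul_nonneg (abs_nonneg _) (gaussianDensity_nonneg _ _ _))
      (le_add_of_nonneg_right (abs_nonneg _))
  · refine le_trans ?_ (hθ'.2 y)
    rw [norm_mul, norm_mul, Real.norm_eq_abs, Real.norm_eq_abs, Real.norm_eq_abs,
      abs_of_nonneg (gaussianDensity_nonneg _ _ _), ← mul_assoc]
    have := mul_nonneg (abs_nonneg (g y)) (gaussianDensity_nonneg (μ + θ' * a) (v + θ' * b) y)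
    gcongr
    linarith
  · exact (hasDerivAt_gaussianDensity_affine μ a v b y θ' hθ'.1).const_mul (g y)

lemma gaussianReal_map_const_add_sqrt_mul (μ : ℝ) {v : ℝ} (hv : 0 ≤ v) :
    (gaussianReal 0 1).map (fun z => μ + √v * z) = gaussianReal μ v.toNNReal := by
  rw [show (fun z => μ + √v * z) = (μ + ·) ∘ (√v * ·) from rfl,
    ← Measure.map_map (by fun_prop) (by fun_prop), gaussianReal_map_const_mul,
    gaussianReal_map_const_add]
  congr 1
  · simp
  · ext; simp [Real.sq_sqrt hv, hv]

lemma integral_mul_gaussianDensity {φ : ℝ → ℝ} (hφ : Measurable φ) (μ : ℝ) {v : ℝ}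
    (hv : 0 < v) :
    ∫ y, φ y * gaussianDensity μ v y = ∫ z, φ (μ + √v * z) ∂gaussianReal 0 1 := by
  rw [← integral_map (by fun_prop) hφ.aestronglyMeasurable,
    gaussianReal_map_const_add_sqrt_mul μ hv.le,
    integral_gaussianReal_eq_integral_smul (by simpa using hv), gaussianPDFReal_toNNReal]
  simp_rw [smul_eq_mul, mul_comm]

lemma sqrt_le_one_add_self (x : ℝ) (hx : 0 ≤ x) : √x ≤ 1 + x := by
  nlinarith [Real.sq_sqrt hx, Real.sqrt_nonneg x]

lemma abs_gaussianScore_const_add_sqrt_mul_le (a b μ : ℝ) {t v : ℝ} (ht : 0 < t) (htv : t ≤ v)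
    (z : ℝ) :
    |gaussianScore a b μ v (μ + √v * z)| ≤ (|a| + |b|) * (1 + t⁻¹) * (1 + |z|) ^ 2 := by
  have hv : 0 < v := ht.trans_le htv
  have hsv : 0 < √v := Real.sqrt_pos.mpr hv
  have hscore :
      gaussianScore a b μ v (μ + √v * z) = a * z * (√v)⁻¹ + b * (z ^ 2 - 1) / (2 * v) := by
    unfold gaussianScore
    field_simp
    linear_combination (2 * a * v * z + b * √v * z ^ 2) * Real.sq_sqrt hv.le
  have h1 : (√v)⁻¹ ≤ 1 + t⁻¹ := by
    rw [← Real.sqrt_inv]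
    exact (sqrt_le_one_add_self _ (by positivity)).trans (by gcongr)
  have h2 : (2 * v)⁻¹ ≤ 1 + t⁻¹ := by
    have : (2 * v)⁻¹ ≤ t⁻¹ := by gcongr; linarith
    linarith
  have hz1 : |z| ≤ (1 + |z|) ^ 2 := by nlinarith [abs_nonneg z]
  have hz2 : |z ^ 2 - 1| ≤ (1 + |z|) ^ 2 := by
    rw [abs_le]; constructor <;> nlinarith [abs_nonneg z, sq_abs z]
  rw [hscore, div_eq_mul_inv]
  calc |a * z * (√v)⁻¹ + b * (z ^ 2 - 1) * (2 * v)⁻¹|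
      ≤ |a| * |z| * (√v)⁻¹ + |b| * |z ^ 2 - 1| * (2 * v)⁻¹ := by
        refine (abs_add_le _ _).trans ?_
        simp only [abs_mul, abs_inv, abs_of_pos hsv, abs_of_pos (by positivity : 0 < 2 * v),
          le_refl]
    _ ≤ |a| * (1 + |z|) ^ 2 * (1 + t⁻¹) + |b| * (1 + |z|) ^ 2 * (1 + t⁻¹) := by gcongr
    _ = _ := by ring

lemma add_abs_add_mul_pow_le (p : ℕ) {A μ c m s : ℝ} (hA : 0 ≤ A) (hμ : |μ| ≤ m) (hc : |c| ≤ s)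
    (z : ℝ) :
    A + |μ + c * z| ^ p ≤ 2 ^ p * (A + m ^ p + s ^ p) * (1 + |z|) ^ p := by
  have hm : 0 ≤ m := (abs_nonneg μ).trans hμ
  have hs : 0 ≤ s := (abs_nonneg c).trans hc
  have hz : 1 ≤ (1 + |z|) ^ p := one_le_pow₀ (by linarith [abs_nonneg z])
  have hlin : |μ + c * z| ≤ (m + s) * (1 + |z|) := by
    calc |μ + c * z| ≤ m + s * |z| := by
          refine (abs_add_le _ _).trans ?_
          rw [abs_mul]; gcongr
      _ ≤ (m + s) * (1 + |z|) := by nlinarith [abs_nonneg z]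
  calc A + |μ + c * z| ^ p
      ≤ 2 ^ p * A * (1 + |z|) ^ p + (2 ^ p * (m ^ p + s ^ p)) * (1 + |z|) ^ p := by
        gcongr
        · have := one_le_mul_of_one_le_of_one_le (one_le_pow₀ (n := p) (by norm_num : (1:ℝ) ≤ 2)) hz
          nlinarith
        · calc |μ + c * z| ^ p ≤ ((m + s) * (1 + |z|)) ^ p := by gcongr
            _ = (m + s) ^ p * (1 + |z|) ^ p := mul_pow _ _ _
            _ ≤ 2 ^ p * (m ^ p + s ^ p) * (1 + |z|) ^ p := by
              gcongr; exact add_pow_le_two_pow_mul hm hs p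
    _ = _ := by ring

lemma abs_integral_mul_gaussianDensity_mul_score_le {g : ℝ → ℝ} (hg : Measurable g)
    {C A : ℝ} {p : ℕ} (hC : 0 ≤ C) (hA : 0 ≤ A) (hgb : ∀ y, |g y| ≤ C * (A + |y| ^ p))
    (a b : ℝ) {μ v t m s : ℝ} (ht : 0 < t) (htv : t ≤ v) (hμ : |μ| ≤ m) (hs : √v ≤ s) :
    |∫ y, g y * (gaussianDensity μ v y * gaussianScore a b μ v y)| ≤
      C * 2 ^ p * (A + m ^ p + s ^ p) * (|a| + |b|) * (1 + t⁻¹) *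
        ∫ z, (1 + |z|) ^ (p + 2) ∂gaussianReal 0 1 := by
  have hv : 0 < v := ht.trans_le htv
  rw [show (fun y => g y * (gaussianDensity μ v y * gaussianScore a b μ v y)) =
      fun y => g y * gaussianScore a b μ v y * gaussianDensity μ v y from funext fun y => by ring,
    integral_mul_gaussianDensity (by fun_prop) μ hv, ← integral_const_mul]
  refine abs_integral_le_integral_abs.trans <| integral_mono_of_nonneg
    (ae_of_all _ fun z => abs_nonneg _)
    ((integrable_one_add_abs_pow_gaussianReal _ 0 1).const_mul _) (ae_of_all _ fun z => ?_)
  have hsv : |√v| ≤ s := by rwa [abs_of_nonneg (Real.sqrt_nonneg v)]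
  have hgz : |g (μ + √v * z)| ≤ C * (2 ^ p * (A + m ^ p + s ^ p) * (1 + |z|) ^ p) :=
    (hgb _).trans (by gcongr; exact add_abs_add_mul_pow_le p hA hμ hsv z)
  calc |g (μ + √v * z) * gaussianScore a b μ v (μ + √v * z)|
      ≤ C * (2 ^ p * (A + m ^ p + s ^ p) * (1 + |z|) ^ p) *
          ((|a| + |b|) * (1 + t⁻¹) * (1 + |z|) ^ 2) := by
        rw [abs_mul]
        exact mul_le_mul hgz (abs_gaussianScore_const_add_sqrt_mul_le a b μ ht htv z)
          (abs_nonneg _) ((abs_nonneg _).trans hgz)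
    _ = _ := by ring

lemma two_pow_mul_add_pow_le (p : ℕ) {A : ℝ} (hA : 0 ≤ A) (w Δw t dt : ℝ) :
    2 ^ p * (A + (|w| + |Δw|) ^ p + (√t + √dt) ^ p) ≤
      4 ^ p * (A + |w| ^ p + |Δw| ^ p + √t ^ p + √dt ^ p) := by
  have h1 := add_pow_le_two_pow_mul (abs_nonneg w) (abs_nonneg Δw) p
  have h2 := add_pow_le_two_pow_mul (Real.sqrt_nonneg t) (Real.sqrt_nonneg dt) p
  have h3 : A ≤ 2 ^ p * A := le_mul_of_one_le_left hA (one_le_pow₀ (by norm_num))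
  rw [show (4 : ℝ) ^ p = 2 ^ p * 2 ^ p by rw [← mul_pow]; norm_num, mul_assoc]
  gcongr
  linarith

lemma abs_integral_mul_gaussianDensity_mul_score_segment_le {g : ℝ → ℝ} (hg : Measurable g)
    {C A : ℝ} {p : ℕ} (hC : 0 ≤ C) (hA : 0 ≤ A) (hgb : ∀ y, |g y| ≤ C * (A + |y| ^ p))
    {w Δw t dt θ : ℝ} (ht : 0 < t) (hdt : 0 ≤ dt) (hθ : θ ∈ Set.Icc (0 : ℝ) 1) :
    |∫ y, g y * (gaussianDensity (w + θ * Δw) (t + θ * dt) y *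
        gaussianScore Δw dt (w + θ * Δw) (t + θ * dt) y)| ≤
      C * 4 ^ p * (∫ z, (1 + |z|) ^ (p + 2) ∂gaussianReal 0 1) * (|Δw| + dt) * (1 + t⁻¹) *
        (A + |w| ^ p + |Δw| ^ p + √t ^ p + √dt ^ p) := by
  have hμ : |w + θ * Δw| ≤ |w| + |Δw| := (abs_add_le _ _).trans <| by
    rw [abs_mul, abs_of_nonneg hθ.1]; gcongr; exact mul_le_of_le_one_left (abs_nonneg _) hθ.2
  have hs : √(t + θ * dt) ≤ √t + √dt := by
    rw [Real.sqrt_le_iff]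
    refine ⟨by positivity, ?_⟩
    nlinarith [Real.sq_sqrt ht.le, Real.sq_sqrt hdt, Real.sqrt_nonneg t, Real.sqrt_nonneg dt,
      mul_le_of_le_one_left hdt hθ.2]
  have hK : 0 ≤ ∫ z, (1 + |z|) ^ (p + 2) ∂gaussianReal 0 1 :=
    integral_nonneg fun z => by positivity
  refine (abs_integral_mul_gaussianDensity_mul_score_le hg hC hA hgb Δw dt ht
    (le_add_of_nonneg_right (mul_nonneg hθ.1 hdt)) hμ hs).trans ?_
  rw [abs_of_nonneg hdt]
  calc _ = C * (2 ^ p * (A + (|w| + |Δw|) ^ p + (√t + √dt) ^ p)) *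
        ((|Δw| + dt) * (1 + t⁻¹) * ∫ z, (1 + |z|) ^ (p + 2) ∂gaussianReal 0 1) := by ring
    _ ≤ C * (4 ^ p * (A + |w| ^ p + |Δw| ^ p + √t ^ p + √dt ^ p)) *
        ((|Δw| + dt) * (1 + t⁻¹) * ∫ z, (1 + |z|) ^ (p + 2) ∂gaussianReal 0 1) := by
      gcongr C * ?_ * _; exact two_pow_mul_add_pow_le p hA w Δw t dt
    _ = _ := by ring

theorem abs_integral_gaussianReal_sub_le {g : ℝ → ℝ} (hg : Measurable g) {C A : ℝ} {p : ℕ}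
    (hC : 0 ≤ C) (hA : 0 ≤ A) (hgb : ∀ y, |g y| ≤ C * (A + |y| ^ p)) {w Δw t dt : ℝ}
    (ht : 0 < t) (hdt : 0 ≤ dt) :
    |(∫ z, g (w + Δw + √(t + dt) * z) ∂gaussianReal 0 1) -
        ∫ z, g (w + √t * z) ∂gaussianReal 0 1| ≤
      C * 4 ^ p * (∫ z, (1 + |z|) ^ (p + 2) ∂gaussianReal 0 1) * (|Δw| + dt) * (1 + t⁻¹) *
        (A + |w| ^ p + |Δw| ^ p + √t ^ p + √dt ^ p) := by
  have hvar : ∀ θ ∈ Set.Icc (0 : ℝ) 1, 0 < t + θ * dt := fun θ hθ =>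
    add_pos_of_pos_of_nonneg ht (mul_nonneg hθ.1 hdt)
  have hgrowth (y : ℝ) : |g y| ≤ C * (A + 1) * (1 + |y|) ^ p := by
    have := pow_le_pow_left₀ (abs_nonneg y) (le_add_of_nonneg_left zero_le_one) p
    have := one_le_pow₀ (n := p) (le_add_of_nonneg_right (abs_nonneg y))
    refine (hgb y).trans ?_
    rw [mul_assoc]; gcongr; nlinarith
  have key := norm_image_sub_le_of_norm_deriv_le_segment_01'
    (f := fun θ => ∫ y, g y * gaussianDensity (w + θ * Δw) (t + θ * dt) y)
    (fun θ hθ => (hasDerivAt_integral_mul_gaussianDensity hg hgrowth w Δw t dt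
      (hvar θ hθ)).hasDerivWithinAt)
    (fun θ hθ => abs_integral_mul_gaussianDensity_mul_score_segment_le hg hC hA hgb ht hdt
      (Set.Ico_subset_Icc_self hθ))
  beta_reduce at key
  rw [Real.norm_eq_abs, integral_mul_gaussianDensity hg _ (hvar 1 (by simp)),
    integral_mul_gaussianDensity hg _ (hvar 0 (by simp))] at key
  simpa using key

theorem PsiAlphaSmoothnessBound_general (p : ℕ) (C : ℝ) (hC : 0 < C) :
    ∃ R : ℝ, 0 < R ∧
      ∀ (m : ℕ) (ψ : (Fin (m + 1) → ℝ) → ℝ), Measurable ψ →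
      (∀ x, |ψ x| ≤ C * ∑ i, |x i| ^ p + C) →
      ∀ (a : Fin m → ℝ) (w Δw t dt : ℝ), 0 < t → 0 ≤ dt →
        |(∫ z, ψ (Fin.snoc a (w + Δw + Real.sqrt (t + dt) * z)) ∂gaussianReal 0 1) -
            (∫ z, ψ (Fin.snoc a (w + Real.sqrt t * z)) ∂gaussianReal 0 1)| ≤
          R * (|Δw| + dt) * (1 + t⁻¹) *
            ((1 + ∑ i, |a i| ^ p) + |w| ^ p + |Δw| ^ p +
              Real.sqrt t ^ p + Real.sqrt dt ^ p) := by
  have hK : 1 ≤ ∫ z, (1 + |z|) ^ (p + 2) ∂gaussianReal 0 1 := by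
    simpa using integral_mono (integrable_const 1) (integrable_one_add_abs_pow_gaussianReal _ 0 1)
      fun z => one_le_pow₀ (le_add_of_nonneg_right (abs_nonneg z))
  refine ⟨C * 4 ^ p * ∫ z, (1 + |z|) ^ (p + 2) ∂gaussianReal 0 1, by positivity,
    fun m ψ hψ hψb a w Δw t dt ht hdt => ?_⟩
  have hgb (y : ℝ) : |ψ (Fin.snoc a y)| ≤ C * ((1 + ∑ i, |a i| ^ p) + |y| ^ p) := by
    have := hψb (Fin.snoc a y)
    simp only [Fin.sum_univ_castSucc, Fin.snoc_castSucc, Fin.snoc_last] at this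
    linarith
  exact abs_integral_gaussianReal_sub_le (hψ.comp (by fun_prop)) hC.le
    (by positivity) hgb ht hdt

/-- Smoothness of Gaussian-smoothed functions: fix `p ≥ 1` and `C > 0`.  There is a constant
`R > 0` depending only on `p` and `C` such that for every `m`, every measurable
`ψ : ℝ^m → ℝ` with `|ψ(x)| ≤ C ∑ᵢ |xᵢ|^p + C`, every `a ∈ ℝ^{m-1}`, and
`Ψ(w; τ²) = E_{z∼N(0,1)}[ψ(a, w + τz)]`, one has for all `w, Δw`, `τ² > 0`, `Δτ² ≥ 0`:
`|Ψ(w+Δw; τ²+Δτ²) − Ψ(w; τ²)| ≤ R (|Δw| + Δτ²)(1 + τ⁻²)(S + |w|^p + |Δw|^p + τ^p + (Δτ²)^{p/2})`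
where `S = 1 + ∑ᵢ |aᵢ|^p`.  (The dimension is written `m + 1` so that `m ≥ 1`.) -/
theorem PsiAlphaSmoothnessBound (p : ℕ) (hp : 1 ≤ p) (C : ℝ) (hC : 0 < C) :
    ∃ R : ℝ, 0 < R ∧
      ∀ (m : ℕ) (ψ : (Fin (m + 1) → ℝ) → ℝ), Measurable ψ →
      (∀ x, |ψ x| ≤ C * ∑ i, |x i| ^ p + C) →
      ∀ (a : Fin m → ℝ) (w Δw t dt : ℝ), 0 < t → 0 ≤ dt →
        |(∫ z, ψ (Fin.snoc a (w + Δw + Real.sqrt (t + dt) * z)) ∂gaussianReal 0 1) -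
            (∫ z, ψ (Fin.snoc a (w + Real.sqrt t * z)) ∂gaussianReal 0 1)| ≤
          R * (|Δw| + dt) * (1 + t⁻¹) *
            ((1 + ∑ i, |a i| ^ p) + |w| ^ p + |Δw| ^ p +
              Real.sqrt t ^ p + Real.sqrt dt ^ p) :=
  PsiAlphaSmoothnessBound_general p C hC
end
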